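/- arXiv:1302.2129 — 2 statements merged into one kernel-verified Lean document; each statement's English description precedes it below -/
import Mathlib

section
/- Suppose a nonnegative sequence e(τ) satisfies e(τ+1) ≤ c·ε(τ)² + (1 - ε(τ))·e(τ) for all τ ≥ 0, where ε(τ) = 1/(1/δ + τ), δ ∈ (0, 1/2), and c ≥ 0. Then for all τ ≥ 1, e(τ) ≤ c·log(τ + 1/δ - 1)/(τ + 1/δ - 1) + e(0)·(1/δ - 1)/(τ + 1/δ - 1). -/
/-! Multiplying the recursion by `1/ε(τ) = τ + 1/δ` turns it into
`(τ + 1/δ) e(τ+1) ≤ c ε(τ) + (τ + 1/δ - 1) e(τ)`, which telescopes to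
`(τ + 1/δ - 1) e(τ) ≤ c ∑_{k<τ} ε(k) + (1/δ - 1) e(0)`.  The harmonic-type sum is at most
`log (τ + 1/δ - 1)`: each term `1/(x+1)` is bounded by `log (x+1) - log x`, and the first term
`δ` by `log (1/δ)`, since `δ < 1/2`. -/

open Finset Real

lemma inv_add_one_le_log_add_one_sub_log {x : ℝ} (hx : 0 < x) :
    (x + 1)⁻¹ ≤ log (x + 1) - log x := by
  have h := one_sub_inv_le_log_of_pos (show 0 < (x + 1) / x by positivity)
  rw [log_div (by positivity) hx.ne', inv_div] at h
  have hsub : 1 - x / (x + 1) = (x + 1)⁻¹ := by field_simp; ring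
  linarith

lemma inv_le_log_of_two_le {s : ℝ} (hs : 2 ≤ s) : s⁻¹ ≤ log s := by
  have h := one_sub_inv_le_log_of_pos (show 0 < s by linarith)
  have hinv : s⁻¹ ≤ 2⁻¹ := inv_anti₀ two_pos hs
  linarith

lemma sum_range_inv_add_le_log {s : ℝ} (hs : 2 ≤ s) (n : ℕ) :
    ∑ k ∈ range (n + 1), (s + k)⁻¹ ≤ log (s + n) := by
  induction n with
  | zero => simpa using inv_le_log_of_two_le hs
  | succ n ih =>
    have hstep := inv_add_one_le_log_add_one_sub_log (show 0 < s + n by positivity)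
    rw [sum_range_succ]
    push_cast
    rw [← add_assoc]
    linarith

lemma mul_le_div_add_of_le_sq_add_one_sub {y c a b : ℝ} (hy : 0 < y)
    (h : b ≤ c * (1 / y) ^ 2 + (1 - 1 / y) * a) : y * b ≤ c / y + (y - 1) * a := by
  have hmul := mul_le_mul_of_nonneg_left h hy.le
  have hexp : y * (c * (1 / y) ^ 2 + (1 - 1 / y) * a) = c / y + (y - 1) * a := by
    field_simp
  linarith

lemma mul_le_sum_of_le_sq_add_one_sub {s c : ℝ} (hs : 0 < s) (e : ℕ → ℝ)
    (hrec : ∀ t : ℕ, e (t + 1) ≤ c * (1 / (s + t)) ^ 2 + (1 - 1 / (s + t)) * e t) (n : ℕ) :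
    (s + n) * e (n + 1) ≤ c * ∑ k ∈ range (n + 1), (s + k)⁻¹ + (s - 1) * e 0 := by
  have hstep (t : ℕ) : (s + t) * e (t + 1) ≤ c / (s + t) + (s + t - 1) * e t :=
    mul_le_div_add_of_le_sq_add_one_sub (by positivity) (hrec t)
  induction n with
  | zero => simpa [div_eq_mul_inv] using hstep 0
  | succ n ih =>
    have h := hstep (n + 1)
    rw [sum_range_succ, mul_add]
    push_cast at h ⊢
    rw [add_sub_assoc, add_sub_cancel_right] at h
    rw [div_eq_mul_inv] at h
    linarith

theorem stmt3_general (δ c : ℝ) (hδ1 : 0 < δ) (hδ2 : δ < 1 / 2) (hc : 0 ≤ c)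
    (ε : ℕ → ℝ) (hε : ∀ t : ℕ, ε t = 1 / (1 / δ + t))
    (e : ℕ → ℝ)
    (hrec : ∀ t : ℕ, e (t + 1) ≤ c * (ε t) ^ 2 + (1 - ε t) * e t) :
    ∀ τ : ℕ, 1 ≤ τ →
      e τ ≤ c * Real.log ((τ : ℝ) + 1 / δ - 1) / ((τ : ℝ) + 1 / δ - 1)
            + e 0 * (1 / δ - 1) / ((τ : ℝ) + 1 / δ - 1) := by
  intro τ hτ
  obtain ⟨n, rfl⟩ : ∃ n, τ = n + 1 := ⟨τ - 1, by omega⟩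
  have hs : 2 ≤ 1 / δ := by rw [le_div_iff₀ hδ1]; linarith
  have hweighted := mul_le_sum_of_le_sq_add_one_sub (by positivity) e
    (fun t ↦ hε t ▸ hrec t) n
  have hsum := mul_le_mul_of_nonneg_left (sum_range_inv_add_le_log hs n) hc
  have hx : ((n + 1 : ℕ) : ℝ) + 1 / δ - 1 = 1 / δ + n := by push_cast; ring
  rw [hx, ← add_div, le_div_iff₀ (by positivity), mul_comm]
  linarith

theorem stmt3 (δ c : ℝ) (hδ1 : 0 < δ) (hδ2 : δ < 1 / 2) (hc : 0 ≤ c)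
    (ε : ℕ → ℝ) (hε : ∀ t : ℕ, ε t = 1 / (1 / δ + t))
    (e : ℕ → ℝ) (he0 : ∀ t, 0 ≤ e t)
    (hrec : ∀ t : ℕ, e (t + 1) ≤ c * (ε t) ^ 2 + (1 - ε t) * e t) :
    ∀ τ : ℕ, 1 ≤ τ →
      e τ ≤ c * Real.log ((τ : ℝ) + 1 / δ - 1) / ((τ : ℝ) + 1 / δ - 1)
            + e 0 * (1 / δ - 1) / ((τ : ℝ) + 1 / δ - 1) :=
  stmt3_general δ c hδ1 hδ2 hc ε hε e hrec
end

section
/- (Poincaré inequality for Markov chains, applied form) Let P be the transition matrix of an irreducible reversible Markov chain on n states with stationary distribution π, and suppose for each ordered pair (s,t) a path γ_{st} is chosen with weight |γ_{st}| = Σ_{edges (u,v) ∈ γ_{st}} 1/(π(u)P_{uv}). If κ = max over directed edges e of Σ_{γ_{st} ∋ e} |γ_{st}| π(s)π(t), then the second largest eigenvalue satisfies λ_{n-1}(P) ≤ 1 − 1/κ. -/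
/-!
For a mean-zero eigenvector `v` with eigenvalue `μ`, reversibility turns the Dirichlet form
`½ Σ π(x) P(x,y) (v y - v x)²` into `(1 - μ) Σ π v²`, and `Σ π = 1` turns
`½ Σ π(s) π(t) (v t - v s)²` into `Σ π v²`. Writing `v t - v s` as a telescoping sum along
`γ_{st}` and applying Cauchy–Schwarz with the weights `π(u) P(u,v)` bounds
`π(s) π(t) (v t - v s)²` by `π(s) π(t) |γ_{st}|` times the energy of `v` on the edges of `γ_{st}`;
summing over `(s, t)` and exchanging with the sum over edges gives the Poincaré inequality
`Σ π v² ≤ κ (1 - μ) Σ π v²`.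
-/

open Matrix

/-- Weight `|γ|` of a path given by its vertex list: the sum over consecutive
edges `(u,v)` of `1/(π u * P u v)`. -/
noncomputable def pathWeight {n : ℕ} (P : Matrix (Fin n) (Fin n) ℝ)
    (π : Fin n → ℝ) (γ : List (Fin n)) : ℝ :=
  ((γ.zip γ.tail).map (fun e => 1 / (π e.1 * P e.1 e.2))).sum

namespace List

variable {α : Type*}

theorem Nodup.consecutivePairs {l : List α} (h : l.Nodup) : l.consecutivePairs.Nodup :=
  .of_map Prod.snd <| by
    rw [map_snd_zip (by simp)]
    exact h.sublist (tail_sublist l)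

theorem IsChain.rel_of_mem_consecutivePairs {R : α → α → Prop} {l : List α} (h : l.IsChain R)
    {e : α × α} (he : e ∈ l.consecutivePairs) : R e.1 e.2 := by
  induction l using twoStepInduction with
  | nil | singleton => simp [consecutivePairs] at he
  | cons_cons a b r _ ih =>
    rcases mem_cons.mp he with rfl | he
    · exact (isChain_cons_cons.mp h).1
    · exact ih b (isChain_cons_cons.mp h).2 he

theorem consecutivePairs_sublist_cons (a : α) (l : List α) :
    l.consecutivePairs <+ (a :: l).consecutivePairs := by
  cases l <;> simp [consecutivePairs]

theorem IsSuffix.consecutivePairs_sublist {l₁ l₂ : List α} (h : l₁ <:+ l₂) :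
    l₁.consecutivePairs <+ l₂.consecutivePairs := by
  obtain ⟨u, rfl⟩ := h
  induction u with
  | nil => simp
  | cons a u ih => exact ih.trans (consecutivePairs_sublist_cons a (u ++ l₁))

theorem sum_map_consecutivePairs_sub {G : Type*} [AddCommGroup G] (f : α → G) {l : List α}
    {s t : α} (hs : l.head? = some s) (ht : l.getLast? = some t) :
    (l.consecutivePairs.map fun e => f e.2 - f e.1).sum = f t - f s := by
  induction l generalizing s with
  | nil => simp at hs
  | cons a l ih =>
    obtain rfl : a = s := by simpa using hs
    cases l with
    | nil =>
      obtain rfl : a = t := by simpa using ht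
      simp [consecutivePairs]
    | cons b r =>
      have := ih (s := b) rfl (by simpa [getLast?_cons_cons] using ht)
      simp only [consecutivePairs, tail_cons, zip_cons_cons, map_cons, sum_cons] at this ⊢
      rw [this]; abel

theorem exists_nodup_consecutivePairs_sublist (l : List α) :
    ∃ l' : List α, l'.head? = l.head? ∧ l'.getLast? = l.getLast? ∧ l'.Nodup ∧
      l'.consecutivePairs <+ l.consecutivePairs := by
  classical
  induction l with
  | nil => exact ⟨[], by simp⟩
  | cons a l ih =>
    obtain ⟨l', hhead, hlast, hnodup, hsub⟩ := ih
    by_cases ha : a ∈ l'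
    · obtain ⟨p, q, rfl⟩ := mem_iff_append.mp ha
      have hl : l ≠ [] := by rintro rfl; simp at hhead
      refine ⟨a :: q, rfl, ?_, hnodup.sublist (sublist_append_right p _), ?_⟩
      · rw [← getLast?_append_of_ne_nil p (cons_ne_nil a q), hlast]
        obtain ⟨b, m, rfl⟩ := exists_cons_of_ne_nil hl
        exact getLast?_cons_cons.symm
      · exact ((suffix_append p _).consecutivePairs_sublist.trans hsub).trans
          (consecutivePairs_sublist_cons a l)
    · refine ⟨a :: l', rfl, ?_, nodup_cons.mpr ⟨ha, hnodup⟩, ?_⟩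
      · cases l' <;> cases l <;> simp_all [getLast?_cons_cons]
      · cases l' with
        | nil => simp [consecutivePairs]
        | cons b r =>
          cases l with
          | nil => simp at hhead
          | cons c m =>
            obtain rfl : b = c := by simpa using hhead
            exact hsub.cons_cons _

end List

section DirichletForm

variable {ι : Type*} [Fintype ι]

noncomputable def dirichletForm (P : Matrix ι ι ℝ) (π f : ι → ℝ) : ℝ :=
  (∑ x, ∑ y, π x * P x y * (f y - f x) ^ 2) / 2

theorem sum_sum_mul_sq_sub_div_two {π : ι → ℝ} (hπ : ∑ i, π i = 1) (f : ι → ℝ) :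
    (∑ s, ∑ t, π s * π t * (f t - f s) ^ 2) / 2 = ∑ s, π s * f s ^ 2 - (∑ s, π s * f s) ^ 2 := by
  have hexpand : ∀ s t, π s * π t * (f t - f s) ^ 2 =
      π s * (π t * f t ^ 2) - 2 * (π s * f s) * (π t * f t) + π t * (π s * f s ^ 2) :=
    fun s t => by ring
  simp only [hexpand, Finset.sum_add_distrib, Finset.sum_sub_distrib, ← Finset.mul_sum,
    ← Finset.sum_mul, hπ]
  ring

theorem dirichletForm_eq_sum_mul_sub_mulVec {P : Matrix ι ι ℝ} {π : ι → ℝ}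
    (hrow : ∀ i, ∑ j, P i j = 1) (hrev : ∀ i j, π i * P i j = π j * P j i) (f : ι → ℝ) :
    dirichletForm P π f = ∑ x, π x * f x * (f x - (P *ᵥ f) x) := by
  have hexpand : ∀ x y, π x * P x y * (f y - f x) ^ 2 =
      π y * P y x * f y ^ 2 - 2 * (π x * f x * (P x y * f y)) + π x * f x ^ 2 * P x y :=
    fun x y => by linear_combination f y ^ 2 * hrev x y
  have hsymm : ∑ x, ∑ y, π y * P y x * f y ^ 2 = ∑ y, π y * f y ^ 2 := by
    rw [Finset.sum_comm]
    refine Finset.sum_congr rfl fun y _ => ?_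
    simp only [← Finset.sum_mul, ← Finset.mul_sum, hrow, mul_one]
  have hrhs : ∑ x, π x * f x * (f x - (P *ᵥ f) x) =
      ∑ x, π x * f x ^ 2 - ∑ x, π x * f x * (P *ᵥ f) x := by
    rw [← Finset.sum_sub_distrib]
    exact Finset.sum_congr rfl fun x _ => by ring
  rw [dirichletForm, hrhs]
  simp only [hexpand, Finset.sum_add_distrib, Finset.sum_sub_distrib, hsymm,
    ← Finset.mul_sum, hrow, mul_one, Matrix.mulVec, dotProduct]
  ring

end DirichletForm

section CanonicalPaths

variable {n : ℕ} {P : Matrix (Fin n) (Fin n) ℝ} {π : Fin n → ℝ}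

theorem pathWeight_le_of_sublist (hπ : ∀ i, 0 ≤ π i) (hP : ∀ i j, 0 ≤ P i j)
    {γ γ' : List (Fin n)} (h : γ'.consecutivePairs.Sublist γ.consecutivePairs) :
    pathWeight P π γ' ≤ pathWeight P π γ :=
  (h.map _).sum_le_sum <| by
    simp only [List.mem_map]
    rintro _ ⟨e, -, rfl⟩
    exact div_nonneg zero_le_one (mul_nonneg (hπ _) (hP _ _))

theorem pathWeight_nonneg (hπ : ∀ i, 0 ≤ π i) (hP : ∀ i j, 0 ≤ P i j) (γ : List (Fin n)) :
    0 ≤ pathWeight P π γ :=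
  pathWeight_le_of_sublist (γ' := []) hπ hP (List.nil_sublist _)

theorem sq_sub_le_pathWeight_mul (hπ : ∀ i, 0 < π i) (hP : ∀ i j, 0 ≤ P i j) (f : Fin n → ℝ)
    {γ : List (Fin n)} {s t : Fin n} (hs : γ.head? = some s) (ht : γ.getLast? = some t)
    (hγ : γ.IsChain fun u v => 0 < P u v) :
    (f t - f s) ^ 2 ≤ pathWeight P π γ * ∑ e : Fin n × Fin n,
      if e ∈ γ.consecutivePairs then π e.1 * P e.1 e.2 * (f e.2 - f e.1) ^ 2 else 0 := by
  classical
  -- An edge repeated along `γ` would be counted with multiplicity by Cauchy–Schwarz but only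
  -- once on the right, so we pass to a loop-erased subpath.
  obtain ⟨γ', hs', ht', hnodup, hsub⟩ := γ.exists_nodup_consecutivePairs_sublist
  set F := γ'.consecutivePairs.toFinset
  have hF : F ⊆ γ.consecutivePairs.toFinset := fun e he =>
    List.mem_toFinset.mpr (hsub.subset (List.mem_toFinset.mp he))
  have hQ : ∀ e ∈ F, 0 < π e.1 * P e.1 e.2 := fun e he =>
    mul_pos (hπ _) (hγ.rel_of_mem_consecutivePairs (List.mem_toFinset.mp (hF he)))
  calc (f t - f s) ^ 2 = (∑ e ∈ F, (f e.2 - f e.1)) ^ 2 := by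
        rw [List.sum_toFinset _ hnodup.consecutivePairs,
          List.sum_map_consecutivePairs_sub f (hs' ▸ hs) (ht' ▸ ht)]
    _ ≤ (∑ e ∈ F, 1 / (π e.1 * P e.1 e.2)) *
          ∑ e ∈ F, π e.1 * P e.1 e.2 * (f e.2 - f e.1) ^ 2 :=
        Finset.sum_sq_le_sum_mul_sum_of_sq_le_mul F
          (fun e he => (one_div_pos.mpr (hQ e he)).le)
          (fun e he => mul_nonneg (hQ e he).le (sq_nonneg _))
          (fun e he => by rw [← mul_assoc, one_div_mul_cancel (hQ e he).ne', one_mul])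
    _ = pathWeight P π γ' * ∑ e ∈ F, π e.1 * P e.1 e.2 * (f e.2 - f e.1) ^ 2 := by
        rw [List.sum_toFinset _ hnodup.consecutivePairs]
        rfl
    _ ≤ pathWeight P π γ * ∑ e ∈ γ.consecutivePairs.toFinset,
          π e.1 * P e.1 e.2 * (f e.2 - f e.1) ^ 2 :=
        mul_le_mul (pathWeight_le_of_sublist (fun i => (hπ i).le) hP hsub)
          (Finset.sum_le_sum_of_subset_of_nonneg hF fun e _ _ =>
            mul_nonneg (mul_nonneg (hπ _).le (hP _ _)) (sq_nonneg _))
          (Finset.sum_nonneg fun e he => mul_nonneg (hQ e he).le (sq_nonneg _))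
          (pathWeight_nonneg (fun i => (hπ i).le) hP γ)
    _ = _ := by simp only [← List.mem_toFinset, Finset.sum_ite_mem, Finset.univ_inter]

theorem sum_sum_mul_sq_sub_div_two_le_mul_dirichletForm (hπ : ∀ i, 0 < π i)
    (hP : ∀ i j, 0 ≤ P i j)
    (γ : Fin n → Fin n → List (Fin n))
    (hhead : ∀ s t, (γ s t).head? = some s) (hlast : ∀ s t, (γ s t).getLast? = some t)
    (hchain : ∀ s t, (γ s t).IsChain fun u v => 0 < P u v) {κ : ℝ}
    (hκ : ∀ e : Fin n × Fin n, (∑ s, ∑ t, if e ∈ (γ s t).consecutivePairs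
      then pathWeight P π (γ s t) * π s * π t else 0) ≤ κ) (f : Fin n → ℝ) :
    (∑ s, ∑ t, π s * π t * (f t - f s) ^ 2) / 2 ≤ κ * dirichletForm P π f := by
  set D : Fin n × Fin n → ℝ := fun e => π e.1 * P e.1 e.2 * (f e.2 - f e.1) ^ 2
  have hD : ∀ e, 0 ≤ D e := fun e => mul_nonneg (mul_nonneg (hπ _).le (hP _ _)) (sq_nonneg _)
  have hpair : ∀ s t, π s * π t * (f t - f s) ^ 2 ≤ ∑ e : Fin n × Fin n,
      (if e ∈ (γ s t).consecutivePairs then pathWeight P π (γ s t) * π s * π t else 0) * D e := by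
    intro s t
    calc π s * π t * (f t - f s) ^ 2
        ≤ π s * π t * (pathWeight P π (γ s t) * ∑ e : Fin n × Fin n,
            if e ∈ (γ s t).consecutivePairs then D e else 0) :=
          mul_le_mul_of_nonneg_left
            (sq_sub_le_pathWeight_mul hπ hP f (hhead s t) (hlast s t) (hchain s t))
            (mul_nonneg (hπ s).le (hπ t).le)
      _ = _ := by
          rw [Finset.mul_sum, Finset.mul_sum]
          exact Finset.sum_congr rfl fun e _ => by split_ifs <;> ring
  have hκD : ∀ e, (∑ s, ∑ t, (if e ∈ (γ s t).consecutivePairs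
      then pathWeight P π (γ s t) * π s * π t else 0) * D e) ≤ κ * D e := fun e => by
    simp only [← Finset.sum_mul]
    exact mul_le_mul_of_nonneg_right (hκ e) (hD e)
  calc (∑ s, ∑ t, π s * π t * (f t - f s) ^ 2) / 2
      ≤ (∑ s, ∑ t, ∑ e : Fin n × Fin n, (if e ∈ (γ s t).consecutivePairs
          then pathWeight P π (γ s t) * π s * π t else 0) * D e) / 2 := by
        gcongr with s _ t _
        exact hpair s t
    _ ≤ (∑ e : Fin n × Fin n, κ * D e) / 2 := by
        rw [Finset.sum_congr rfl fun s _ => Finset.sum_comm, Finset.sum_comm]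
        gcongr with e
        exact hκD e
    _ = κ * dirichletForm P π f := by
        rw [← Finset.mul_sum, dirichletForm, Fintype.sum_prod_type, mul_div_assoc]

end CanonicalPaths

theorem stmt10_general (n : ℕ) (P : Matrix (Fin n) (Fin n) ℝ) (π : Fin n → ℝ)
    (hπpos : ∀ i, 0 < π i) (hπsum : ∑ i, π i = 1)
    (hnonneg : ∀ i j, 0 ≤ P i j) (hrow : ∀ i, ∑ j, P i j = 1)
    (hrev : ∀ i j, π i * P i j = π j * P j i)
    (γ : Fin n → Fin n → List (Fin n))
    (hhead : ∀ s t, (γ s t).head? = some s)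
    (hlast : ∀ s t, (γ s t).getLast? = some t)
    (hchain : ∀ s t, (γ s t).Chain' (fun u v => 0 < P u v))
    (κ : ℝ) (hκ : 0 < κ)
    (hκdef : ∀ e : Fin n × Fin n,
      (∑ s, ∑ t, (if e ∈ (γ s t).zip (γ s t).tail
          then pathWeight P π (γ s t) * π s * π t else 0)) ≤ κ) :
    ∀ (μ : ℝ) (v : Fin n → ℝ), v ≠ 0 → P *ᵥ v = μ • v →
      (∑ i, π i * v i = 0) → μ ≤ 1 - 1 / κ := by
  intro μ v hv heig hmean
  set S := ∑ i, π i * v i ^ 2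
  have hS : 0 < S := by
    obtain ⟨i, hi⟩ := Function.ne_iff.mp hv
    exact Finset.sum_pos' (fun j _ => mul_nonneg (hπpos j).le (sq_nonneg _))
      ⟨i, Finset.mem_univ i, mul_pos (hπpos i) (sq_pos_of_ne_zero hi)⟩
  have hvar : (∑ s, ∑ t, π s * π t * (v t - v s) ^ 2) / 2 = S := by
    rw [sum_sum_mul_sq_sub_div_two hπsum, hmean]
    ring
  have hdir : dirichletForm P π v = (1 - μ) * S := by
    rw [dirichletForm_eq_sum_mul_sub_mulVec hrow hrev, heig, Finset.mul_sum]
    exact Finset.sum_congr rfl fun i _ => by simp only [Pi.smul_apply, smul_eq_mul]; ring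
  have hpoincare := sum_sum_mul_sq_sub_div_two_le_mul_dirichletForm
    hπpos hnonneg γ hhead hlast hchain hκdef v
  rw [hvar, hdir, ← mul_assoc] at hpoincare
  have hgap : 1 ≤ κ * (1 - μ) := le_of_mul_le_mul_right (by linarith) hS
  linarith [(div_le_iff₀ hκ).mpr (by linarith : 1 ≤ (1 - μ) * κ)]

theorem stmt10 (n : ℕ) (P : Matrix (Fin n) (Fin n) ℝ) (π : Fin n → ℝ)
    (hπpos : ∀ i, 0 < π i) (hπsum : ∑ i, π i = 1)
    (hnonneg : ∀ i j, 0 ≤ P i j) (hrow : ∀ i, ∑ j, P i j = 1)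
    (hrev : ∀ i j, π i * P i j = π j * P j i)
    (hirr : ∀ i j, ∃ k : ℕ, 0 < (P ^ k) i j)
    (γ : Fin n → Fin n → List (Fin n))
    (hhead : ∀ s t, (γ s t).head? = some s)
    (hlast : ∀ s t, (γ s t).getLast? = some t)
    (hchain : ∀ s t, (γ s t).Chain' (fun u v => 0 < P u v))
    (κ : ℝ) (hκ : 0 < κ)
    (hκdef : ∀ e : Fin n × Fin n,
      (∑ s, ∑ t, (if e ∈ (γ s t).zip (γ s t).tail
          then pathWeight P π (γ s t) * π s * π t else 0)) ≤ κ) :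
    ∀ (μ : ℝ) (v : Fin n → ℝ), v ≠ 0 → P *ᵥ v = μ • v →
      (∑ i, π i * v i = 0) → μ ≤ 1 - 1 / κ :=
  stmt10_general n P π hπpos hπsum hnonneg hrow hrev γ hhead hlast hchain κ hκ hκdef
end
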